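/- arXiv:math-ph/0206025 — 4 statements merged into one kernel-verified Lean document; each statement's English description precedes it below -/
import Mathlib

section
/- For the Fibonacci trace sequence, the quantity x_{k+1}² + x_k² + x_{k-1}² − x_{k+1} x_k x_{k-1} is independent of k: if x_{k+1} = x_k x_{k-1} − x_{k-2} for all k ≥ 2, then x_{k+1}² + x_k² + x_{k-1}² − x_{k+1} x_k x_{k-1} = x_2² + x_1² + x_0² − x_2 x_1 x_0 for all k ≥ 1. -/
/-- For the Fibonacci trace recursion `x (k+1) = x k * x (k-1) - x (k-2)`, the quantity
`x (k+1)² + x k² + x (k-1)² - x (k+1) x k x (k-1)` is independent of `k`. -/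
theorem fibonacci_invariant (x : ℕ → ℝ)
    (hrec : ∀ k, x (k + 3) = x (k + 2) * x (k + 1) - x k) :
    ∀ k, x (k + 2) ^ 2 + x (k + 1) ^ 2 + x k ^ 2 - x (k + 2) * x (k + 1) * x k
      = x 2 ^ 2 + x 1 ^ 2 + x 0 ^ 2 - x 2 * x 1 * x 0 := by
  intro k
  induction k with
  | zero => rfl
  | succ n ih =>
    rw [← ih, hrec n]
    ring
end

section
/- If λ > 4 and real numbers x, y, z satisfy the Fibonacci invariant x² + y² + z² − xyz = 4 + λ², then max{|x|, |y|, |z|} > 2. -/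
/-- If `λ > 4` and `x² + y² + z² - xyz = 4 + λ²`, then `max {|x|, |y|, |z|} > 2`. -/
theorem fibonacci_invariant_escape (lam x y z : ℝ) (hlam : 4 < lam)
    (hinv : x ^ 2 + y ^ 2 + z ^ 2 - x * y * z = 4 + lam ^ 2) :
    2 < max (max |x| |y|) |z| := by
  by_contra h
  push_neg at h
  have hx : |x| ≤ 2 := le_trans (le_trans (le_max_left _ _) (le_max_left _ _)) h
  have hy : |y| ≤ 2 := le_trans (le_trans (le_max_right _ _) (le_max_left _ _)) h
  have hz : |z| ≤ 2 := le_trans (le_max_right _ _) h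
  have hxy : |x * y| ≤ 4 := by
    rw [abs_mul]
    calc |x| * |y| ≤ 2 * 2 := mul_le_mul hx hy (abs_nonneg y) (by norm_num)
    _ = 4 := by norm_num
  have hxyz : |x * y * z| ≤ 8 := by
    rw [abs_mul]
    calc |x * y| * |z| ≤ 4 * 2 := mul_le_mul hxy hz (abs_nonneg z) (by norm_num)
    _ = 8 := by norm_num
  have h1 : -8 ≤ x * y * z := neg_le_of_abs_le hxyz
  have hx2 : x ^ 2 ≤ 4 := by rw [← sq_abs]; nlinarith [abs_nonneg x]
  have hy2 : y ^ 2 ≤ 4 := by rw [← sq_abs]; nlinarith [abs_nonneg y]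
  have hz2 : z ^ 2 ≤ 4 := by rw [← sq_abs]; nlinarith [abs_nonneg z]
  nlinarith [mul_pos (sub_pos.mpr hlam) (by linarith : (0:ℝ) < lam + 4)]
end

section
/- Let f_±(x,y,λ) = (1/2)[xy ± √(4λ² + (4−x²)(4−y²))]. For λ > 4 and −2 ≤ x, y ≤ 2, both partial derivatives of f_± with respect to x and y have absolute value at most 1. -/
/-!
The `x`-derivative of `f_±` is `(y ∓ x (4 - y²) / r) / 2` with
`r = √(4λ² + (4 - x²)(4 - y²)) ≥ 2λ > 8`. Since `|x| ≤ 2`, the second term is at most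
`2 (2 - |y|)(2 + |y|) / 8 ≤ 2 - |y|`, so the numerator is at most `2` in absolute value. The `y`-derivative follows by the symmetry `f_±(x, y) = f_±(y, x)`.
-/

/-- `fpm (4 * λ ^ 2) (±1)` is `f_±(·, ·, λ)`. -/
noncomputable def fpm (c s x y : ℝ) : ℝ := (x * y + s * √(c + (4 - x ^ 2) * (4 - y ^ 2))) / 2

lemma fpm_comm (c s x y : ℝ) : fpm c s x y = fpm c s y x := by
  simp only [fpm, mul_comm x y, mul_comm (4 - x ^ 2)]

lemma hasDerivAt_fpm_left {c s a b : ℝ} (h : c + (4 - a ^ 2) * (4 - b ^ 2) ≠ 0) :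
    HasDerivAt (fun t => fpm c s t b)
      ((b - s * a * (4 - b ^ 2) / √(c + (4 - a ^ 2) * (4 - b ^ 2))) / 2) a := by
  have hrad : HasDerivAt (fun t => c + (4 - t ^ 2) * (4 - b ^ 2)) (-(2 * a) * (4 - b ^ 2)) a := by
    simpa using ((hasDerivAt_pow 2 a).const_sub 4).mul_const (4 - b ^ 2) |>.const_add c
  refine (((hasDerivAt_id a).mul_const b).add ((hrad.sqrt h).const_mul s)).div_const 2
    |>.congr_deriv ?_
  ring

lemma eight_le_sqrt_fpm {c a b : ℝ} (hc : 64 ≤ c) (ha : |a| ≤ 2) (hb : |b| ≤ 2) :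
    8 ≤ √(c + (4 - a ^ 2) * (4 - b ^ 2)) := by
  have : 0 ≤ (4 - a ^ 2) * (4 - b ^ 2) := by
    apply mul_nonneg <;> nlinarith [sq_abs a, sq_abs b, abs_nonneg a, abs_nonneg b]
  exact Real.le_sqrt_of_sq_le (by linarith)

lemma abs_sub_mul_div_le_two {s a b r : ℝ} (hs : |s| ≤ 1) (ha : |a| ≤ 2) (hb : |b| ≤ 2)
    (hr : 8 ≤ r) : |b - s * a * (4 - b ^ 2) / r| ≤ 2 := by
  have hb2 : 0 ≤ 4 - b ^ 2 := by nlinarith [sq_abs b, abs_nonneg b]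
  have hsa : |s * a| ≤ 2 := by rw [abs_mul]; nlinarith [abs_nonneg s, abs_nonneg a]
  calc |b - s * a * (4 - b ^ 2) / r|
      ≤ |b| + |s * a| * (4 - b ^ 2) / r := by
        grw [abs_sub, abs_div, abs_mul, abs_of_nonneg hb2, abs_of_pos (by linarith : 0 < r)]
    _ ≤ |b| + 2 * (4 - b ^ 2) / 8 := by gcongr
    _ ≤ 2 := by nlinarith [sq_abs b, abs_nonneg b]

lemma abs_deriv_fpm_left_le_one {c s a b : ℝ} (hc : 64 ≤ c) (hs : |s| ≤ 1) (ha : |a| ≤ 2)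
    (hb : |b| ≤ 2) : |deriv (fun t => fpm c s t b) a| ≤ 1 := by
  have hr := eight_le_sqrt_fpm hc ha hb
  have hrad : c + (4 - a ^ 2) * (4 - b ^ 2) ≠ 0 := (Real.sqrt_pos.mp (by linarith)).ne'
  rw [(hasDerivAt_fpm_left hrad).deriv, abs_div, abs_two, div_le_one two_pos]
  exact abs_sub_mul_div_le_two hs ha hb hr

/-- Let `f_±(x, y, λ) = (1/2)(xy ± √(4λ² + (4 - x²)(4 - y²)))`. For `λ > 4` and
`x, y ∈ [-2, 2]`, the partial derivatives of `f_±` in `x` and in `y` are bounded by `1`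
in absolute value. `s = ±1` selects the branch. -/
theorem fpm_partial_deriv_bound (lam : ℝ) (hlam : 4 < lam) (s : ℝ) (hs : s = 1 ∨ s = -1)
    (x y : ℝ) (hx : x ∈ Set.Icc (-2 : ℝ) 2) (hy : y ∈ Set.Icc (-2 : ℝ) 2) :
    |deriv (fun t : ℝ =>
        (t * y + s * Real.sqrt (4 * lam ^ 2 + (4 - t ^ 2) * (4 - y ^ 2))) / 2) x| ≤ 1 ∧
    |deriv (fun t : ℝ =>
        (x * t + s * Real.sqrt (4 * lam ^ 2 + (4 - x ^ 2) * (4 - t ^ 2))) / 2) y| ≤ 1 := by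
  have hc : 64 ≤ 4 * lam ^ 2 := by nlinarith
  have hs' : |s| ≤ 1 := by rcases hs with rfl | rfl <;> simp
  have hx' : |x| ≤ 2 := abs_le.mpr hx
  have hy' : |y| ≤ 2 := abs_le.mpr hy
  refine ⟨abs_deriv_fpm_left_le_one hc hs' hx' hy', ?_⟩
  have hswap : (fun t => fpm (4 * lam ^ 2) s x t) = fun t => fpm (4 * lam ^ 2) s t x :=
    funext fun t => fpm_comm _ _ x t
  show |deriv (fun t => fpm (4 * lam ^ 2) s x t) y| ≤ 1
  exact hswap ▸ abs_deriv_fpm_left_le_one hc hs' hy' hx'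
end

section
/- Thue–Morse trace map: if T⁽⁰⁾_{k+1} = T⁽¹⁾_k T⁽⁰⁾_k and T⁽¹⁾_{k+1} = T⁽⁰⁾_k T⁽¹⁾_k for 2×2 determinant-1 matrices, and x_k := tr T⁽⁰⁾_k = tr T⁽¹⁾_k for k ≥ 1, then for k ≥ 2, x_{k+1} = x_{k-1}²(x_k − 2) + 2. -/
lemma ch_det_one (M : Matrix (Fin 2) (Fin 2) ℝ) (h : M.det = 1) :
    M * M = M.trace • M - 1 := by
  rw [Matrix.eta_fin_two M] at h ⊢
  rw [Matrix.det_fin_two_of] at h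
  rw [Matrix.trace_fin_two_of, Matrix.mul_fin_two, Matrix.one_fin_two,
    Matrix.smul_of]
  simp only [Matrix.smul_cons, smul_eq_mul, Matrix.smul_empty]
  ext i j
  fin_cases i <;> fin_cases j <;> simp [Matrix.sub_apply] <;> linarith

/-- Thue–Morse trace map: if `T⁽⁰⁾ (k+1) = T⁽¹⁾ k * T⁽⁰⁾ k` and
`T⁽¹⁾ (k+1) = T⁽⁰⁾ k * T⁽¹⁾ k` for 2×2 determinant-one matrices, and
`x k = tr (T⁽⁰⁾ k) = tr (T⁽¹⁾ k)` for `k ≥ 1`, then for `k ≥ 2`,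
`x (k+1) = x (k-1)² (x k - 2) + 2`. -/
theorem thue_morse_trace_map (T0 T1 : ℕ → Matrix (Fin 2) (Fin 2) ℝ)
    (hdet0 : ∀ k, (T0 k).det = 1) (hdet1 : ∀ k, (T1 k).det = 1)
    (hrec0 : ∀ k, T0 (k + 1) = T1 k * T0 k)
    (hrec1 : ∀ k, T1 (k + 1) = T0 k * T1 k)
    (htr : ∀ k, 1 ≤ k → (T0 k).trace = (T1 k).trace) :
    ∀ k, 2 ≤ k →
      (T0 (k + 1)).trace = (T0 (k - 1)).trace ^ 2 * ((T0 k).trace - 2) + 2 := by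
  intro k hk
  obtain ⟨m, rfl⟩ : ∃ m, k = m + 2 := ⟨k - 2, by omega⟩
  have hk1 : m + 2 - 1 = m + 1 := rfl
  rw [hk1]
  set A := T0 (m + 1) with hAdef
  set B := T1 (m + 1) with hBdef
  have hA : A * A = A.trace • A - 1 := ch_det_one _ (hdet0 _)
  have hB : B * B = B.trace • B - 1 := ch_det_one _ (hdet1 _)
  have htrAB : A.trace = B.trace := htr (m + 1) (by omega)
  have e2 : T0 (m + 2) = B * A := by rw [hrec0]
  have e1 : T0 (m + 2 + 1) = (A * B) * (B * A) := by
    rw [hrec0, hrec1, e2]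
  rw [e1, e2]
  have key : ((A * B) * (B * A)).trace = ((A * A) * (B * B)).trace := by
    rw [show (A * B) * (B * A) = (A * (B * B)) * A by noncomm_ring,
      Matrix.trace_mul_comm,
      show A * (A * (B * B)) = (A * A) * (B * B) by noncomm_ring]
  rw [key, hA, hB]
  have h1 : ((A.trace • A - 1) * (B.trace • B - 1)).trace
      = A.trace * B.trace * (A * B).trace - A.trace * A.trace
        - B.trace * B.trace + 2 := by
    simp only [Matrix.sub_mul, Matrix.mul_sub, Matrix.smul_mul, Matrix.mul_smul,
      smul_smul, one_mul, mul_one, Matrix.trace_sub, Matrix.trace_smul,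
      Matrix.trace_one, smul_eq_mul, Fintype.card_fin, Nat.cast_ofNat]
    ring
  rw [h1, htrAB, Matrix.trace_mul_comm]
  ring
end
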